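/- Let U ⊆ ℝ³ be open, ν : U → ℝ three times continuously differentiable with |∇ν(x)| = 1 for all x ∈ U, and p₀ : U → ℝ a smooth function with Δp₀ = 0 on U. Set v = −∇p₀ and v_τ = v − (v·∇ν)∇ν. Let s ∈ ℂ with s ≠ 0 and let z ∈ ℂ satisfy z² = s. Define u₀ = s^{−1}·( v − e^{−zν}·v_τ ). Then on U one has (s − Δ)u₀ + ∇p₀ = e^{−zν} · z^{−1} · ( −(Δν)·v_τ − 2·∑_{j=1}^{3} (∂_j ν)·(∂_j v_τ) + z^{−1}·Δv_τ ). -/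

import Mathlib

/-- The Laplacian `Δf = ∑_{j=1}^{3} ∂²f/∂x_j²` of a function on `ℝ³`,
acting componentwise on vector-valued functions. -/
noncomputable def lap {F : Type*} [NormedAddCommGroup F] [NormedSpace ℝ F]
    (f : EuclideanSpace ℝ (Fin 3) → F) (x : EuclideanSpace ℝ (Fin 3)) : F :=
  ∑ i : Fin 3,
    fderiv ℝ (fun y => fderiv ℝ f y (EuclideanSpace.single i 1)) x (EuclideanSpace.single i 1)

/-- Componentwise complexification of a real vector in `ℝ³`. -/
noncomputable def cV (v : EuclideanSpace ℝ (Fin 3)) : EuclideanSpace ℂ (Fin 3) :=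
  WithLp.toLp 2 (fun i => (v i : ℂ))

open Filter Topology

abbrev E3' := EuclideanSpace ℝ (Fin 3)
abbrev Ec3' := EuclideanSpace ℂ (Fin 3)

noncomputable def ee (j : Fin 3) : E3' := EuclideanSpace.single j 1

/-- `cV` as a continuous `ℝ`-linear map. -/
noncomputable def cVL : E3' →L[ℝ] Ec3' :=
  ((PiLp.continuousLinearEquiv 2 ℂ (fun _ : Fin 3 => ℂ)).symm.toContinuousLinearMap.restrictScalars ℝ).comp
    (ContinuousLinearMap.pi fun i => Complex.ofRealCLM.comp (EuclideanSpace.proj i))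

lemma cVL_apply (a : E3') : cVL a = cV a := rfl

section helpers

variable {F G : Type*} [NormedAddCommGroup F] [NormedSpace ℝ F]
  [NormedAddCommGroup G] [NormedSpace ℝ G]

lemma lap_def (f : E3' → F) (x : E3') :
    lap f x = ∑ j : Fin 3, fderiv ℝ (fun y => fderiv ℝ f y (ee j)) x (ee j) := rfl

lemma fderiv_directional {f : E3' → F} {x : E3'} (hf : DifferentiableAt ℝ (fderiv ℝ f) x)
    (a : E3') :
    fderiv ℝ (fun y => fderiv ℝ f y a) x = (fderiv ℝ (fderiv ℝ f) x).flip a := by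
  rw [show (fun y => fderiv ℝ f y a) = fun y => (fderiv ℝ f y) a from rfl,
    fderiv_clm_apply hf (differentiableAt_const a)]
  simp

lemma contDiffAt_fderiv_diff {f : E3' → F} {x : E3'} (hf : ContDiffAt ℝ 2 f x) :
    DifferentiableAt ℝ (fderiv ℝ f) x :=
  (hf.fderiv_right (m := 1) le_rfl).differentiableAt one_ne_zero

lemma clm_apply_fderiv {u : E3' → (E3' →L[ℝ] F)} {x : E3'}
    (hu : DifferentiableAt ℝ u x) (a c : E3') :
    fderiv ℝ (fun y => u y c) x a = (fderiv ℝ u x a) c := by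
  rw [show (fun y => u y c) = fun y => (u y) c from rfl,
    fderiv_clm_apply hu (differentiableAt_const c)]
  simp

lemma lap_clm {f : E3' → F} {x : E3'} (L : F →L[ℝ] G)
    (hf : ∀ᶠ y in 𝓝 x, ContDiffAt ℝ 2 f y) :
    lap (fun y => L (f y)) x = L (lap f x) := by
  have hfx : ContDiffAt ℝ 2 f x := hf.self_of_nhds
  have hfd : DifferentiableAt ℝ (fderiv ℝ f) x := contDiffAt_fderiv_diff hfx
  rw [lap_def, lap_def, map_sum]
  refine Finset.sum_congr rfl fun j _ => ?_
  have h1 : (fun y => fderiv ℝ (fun t => L (f t)) y (ee j)) =ᶠ[𝓝 x]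
      (fun y => L (fderiv ℝ f y (ee j))) := by
    filter_upwards [hf] with y hy
    rw [show (fun t => L (f t)) = L ∘ f from rfl,
      fderiv_comp y L.differentiableAt (hy.differentiableAt two_ne_zero),
      L.fderiv]
    rfl
  rw [h1.fderiv_eq]
  have h2 : DifferentiableAt ℝ (fun y => fderiv ℝ f y (ee j)) x :=
    hfd.clm_apply (differentiableAt_const _)
  rw [show (fun y => L (fderiv ℝ f y (ee j))) = L ∘ (fun y => fderiv ℝ f y (ee j)) from rfl,
    fderiv_comp x L.differentiableAt h2, L.fderiv]
  rfl

lemma lap_sub {f g : E3' → F} {x : E3'}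
    (hf : ∀ᶠ y in 𝓝 x, ContDiffAt ℝ 2 f y) (hg : ∀ᶠ y in 𝓝 x, ContDiffAt ℝ 2 g y) :
    lap (fun y => f y - g y) x = lap f x - lap g x := by
  have hfd : DifferentiableAt ℝ (fderiv ℝ f) x := contDiffAt_fderiv_diff hf.self_of_nhds
  have hgd : DifferentiableAt ℝ (fderiv ℝ g) x := contDiffAt_fderiv_diff hg.self_of_nhds
  rw [lap_def, lap_def, lap_def, ← Finset.sum_sub_distrib]
  refine Finset.sum_congr rfl fun j _ => ?_
  have h1 : (fun y => fderiv ℝ (fun t => f t - g t) y (ee j)) =ᶠ[𝓝 x]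
      (fun y => fderiv ℝ f y (ee j) - fderiv ℝ g y (ee j)) := by
    filter_upwards [hf, hg] with y hfy hgy
    rw [fderiv_fun_sub (hfy.differentiableAt two_ne_zero) (hgy.differentiableAt two_ne_zero)]
    rfl
  rw [h1.fderiv_eq, fderiv_fun_sub (hfd.clm_apply (differentiableAt_const _))
    (hgd.clm_apply (differentiableAt_const _))]
  rfl

lemma lap_const_smul {c : ℂ} {f : E3' → Ec3'} {x : E3'}
    (hf : ∀ᶠ y in 𝓝 x, ContDiffAt ℝ 2 f y) :
    lap (fun y => c • f y) x = c • lap f x := by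
  have hfd : DifferentiableAt ℝ (fderiv ℝ f) x := contDiffAt_fderiv_diff hf.self_of_nhds
  rw [lap_def, lap_def, Finset.smul_sum]
  refine Finset.sum_congr rfl fun j _ => ?_
  have h1 : (fun y => fderiv ℝ (fun t => c • f t) y (ee j)) =ᶠ[𝓝 x]
      (fun y => c • fderiv ℝ f y (ee j)) := by
    filter_upwards [hf] with y hy
    rw [fderiv_fun_const_smul (hy.differentiableAt two_ne_zero) c]
    rfl
  rw [h1.fderiv_eq, fderiv_fun_const_smul (hfd.clm_apply (differentiableAt_const _)) c]
  rfl

lemma lap_smul {c : E3' → ℂ} {f : E3' → Ec3'} {x : E3'}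
    (hc : ∀ᶠ y in 𝓝 x, ContDiffAt ℝ 2 c y) (hf : ∀ᶠ y in 𝓝 x, ContDiffAt ℝ 2 f y) :
    lap (fun y => c y • f y) x
      = lap c x • f x
        + (2 : ℂ) • ∑ j : Fin 3, fderiv ℝ c x (ee j) • fderiv ℝ f x (ee j)
        + c x • lap f x := by
  have hcx : ContDiffAt ℝ 2 c x := hc.self_of_nhds
  have hfx : ContDiffAt ℝ 2 f x := hf.self_of_nhds
  have hcd : DifferentiableAt ℝ (fderiv ℝ c) x := contDiffAt_fderiv_diff hcx
  have hfd : DifferentiableAt ℝ (fderiv ℝ f) x := contDiffAt_fderiv_diff hfx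
  have key : ∀ j : Fin 3,
      fderiv ℝ (fun y => fderiv ℝ (fun t => c t • f t) y (ee j)) x (ee j)
        = fderiv ℝ (fun y => fderiv ℝ c y (ee j)) x (ee j) • f x
          + (2 : ℂ) • (fderiv ℝ c x (ee j) • fderiv ℝ f x (ee j))
          + c x • fderiv ℝ (fun y => fderiv ℝ f y (ee j)) x (ee j) := by
    intro j
    have h1 : (fun y => fderiv ℝ (fun t => c t • f t) y (ee j)) =ᶠ[𝓝 x]
        (fun y => c y • fderiv ℝ f y (ee j) + fderiv ℝ c y (ee j) • f y) := by
      filter_upwards [hc, hf] with y hcy hfy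
      rw [fderiv_fun_smul (hcy.differentiableAt two_ne_zero) (hfy.differentiableAt two_ne_zero)]
      simp [ContinuousLinearMap.smulRight_apply]
    rw [h1.fderiv_eq]
    have dA : DifferentiableAt ℝ (fun y => c y • fderiv ℝ f y (ee j)) x :=
      (hcx.differentiableAt two_ne_zero).smul (hfd.clm_apply (differentiableAt_const _))
    have dB : DifferentiableAt ℝ (fun y => fderiv ℝ c y (ee j) • f y) x :=
      (hcd.clm_apply (differentiableAt_const _)).smul (hfx.differentiableAt two_ne_zero)
    rw [fderiv_fun_add dA dB]
    rw [ContinuousLinearMap.add_apply]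
    rw [fderiv_fun_smul (hcx.differentiableAt two_ne_zero) (hfd.clm_apply (differentiableAt_const _))]
    rw [fderiv_fun_smul (hcd.clm_apply (differentiableAt_const _)) (hfx.differentiableAt two_ne_zero)]
    simp only [ContinuousLinearMap.add_apply, ContinuousLinearMap.coe_smul',
      Pi.smul_apply, ContinuousLinearMap.smulRight_apply]
    module
  rw [lap_def]
  rw [Finset.sum_congr rfl fun j _ => key j]
  rw [Finset.sum_add_distrib, Finset.sum_add_distrib, ← Finset.smul_sum, ← Finset.smul_sum,
    ← Finset.sum_smul, lap_def, lap_def]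

end helpers

section expfactor
variable {ν : E3' → ℝ} {z : ℂ}

lemma exp_fderiv_dir {y : E3'} (hν : DifferentiableAt ℝ ν y) (a : E3') :
    fderiv ℝ (fun t => Complex.exp (-z * (ν t : ℂ))) y a
      = Complex.exp (-z * (ν y : ℂ)) * (-z * (fderiv ℝ ν y a : ℂ)) := by
  have hL : HasFDerivAt (fun t => -z * (ν t : ℂ))
      (-(z • Complex.ofRealCLM.comp (fderiv ℝ ν y))) y := by
    have h := (((-z) • Complex.ofRealCLM : ℝ →L[ℝ] ℂ).hasFDerivAt (x := ν y)).comp y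
      hν.hasFDerivAt
    simpa [Function.comp_def, smul_eq_mul] using h
  have := hL.cexp.fderiv
  rw [this]
  simp [mul_comm]

lemma exp_contDiffAt {y : E3'} {n : ℕ∞} (hν : ContDiffAt ℝ n ν y) :
    ContDiffAt ℝ n (fun t => Complex.exp (-z * (ν t : ℂ))) y := by
  apply ContDiffAt.cexp
  exact (contDiffAt_const (c := -z)).mul (Complex.ofRealCLM.contDiff.contDiffAt.comp y hν)

lemma fderiv_constmul_ofReal {w : E3' → ℝ} {x : E3'} (hw : DifferentiableAt ℝ w x) (c : ℂ)
    (a : E3') : fderiv ℝ (fun y => c * (w y : ℂ)) x a = c * (fderiv ℝ w x a : ℂ) := by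
  have h := ((c • Complex.ofRealCLM : ℝ →L[ℝ] ℂ).hasFDerivAt (x := w x)).comp x
    hw.hasFDerivAt
  rw [show (fun y => c * (w y : ℂ)) = ((c • Complex.ofRealCLM : ℝ →L[ℝ] ℂ) ∘ w) by
    funext y; simp, h.fderiv]
  simp

lemma grad_sq_sum (ν : E3' → ℝ) (x : E3') :
    ∑ j : Fin 3, (fderiv ℝ ν x (ee j))^2 = ‖gradient ν x‖^2 := by
  have h : ∀ j : Fin 3, fderiv ℝ ν x (ee j) = gradient ν x j := by
    intro j
    have := @InnerProductSpace.toDual_symm_apply ℝ E3' _ _ _ _ (ee j) (fderiv ℝ ν x)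
    rw [← this]
    rw [show (gradient ν x) = (InnerProductSpace.toDual ℝ E3').symm (fderiv ℝ ν x) from rfl]
    rw [ee, EuclideanSpace.inner_single_right]
    simp
  simp_rw [h]
  rw [← real_inner_self_eq_norm_sq, PiLp.inner_apply]
  simp [sq]

lemma exp_lap {x : E3'} (hν : ∀ᶠ y in 𝓝 x, ContDiffAt ℝ 2 ν y) :
    lap (fun t => Complex.exp (-z * (ν t : ℂ))) x
      = (z^2 * (∑ j : Fin 3, ((fderiv ℝ ν x (ee j) : ℝ) : ℂ)^2)
          - z * ((lap ν x : ℝ) : ℂ)) * Complex.exp (-z * (ν x : ℂ)) := by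
  have hνx : ContDiffAt ℝ 2 ν x := hν.self_of_nhds
  have hνd : DifferentiableAt ℝ (fderiv ℝ ν) x := contDiffAt_fderiv_diff hνx
  have hgx : DifferentiableAt ℝ (fun t => Complex.exp (-z * (ν t : ℂ))) x :=
    (exp_contDiffAt hνx).differentiableAt (by norm_num)
  have key : ∀ j : Fin 3,
      fderiv ℝ (fun y => fderiv ℝ (fun t => Complex.exp (-z * (ν t : ℂ))) y (ee j)) x (ee j)
        = Complex.exp (-z * (ν x : ℂ)) *
            (z^2 * ((fderiv ℝ ν x (ee j) : ℝ) : ℂ)^2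
              - z * ((fderiv ℝ (fun y => fderiv ℝ ν y (ee j)) x (ee j) : ℝ) : ℂ)) := by
    intro j
    have h1 : (fun y => fderiv ℝ (fun t => Complex.exp (-z * (ν t : ℂ))) y (ee j)) =ᶠ[𝓝 x]
        (fun y => Complex.exp (-z * (ν y : ℂ)) * (-z * ((fderiv ℝ ν y (ee j) : ℝ) : ℂ))) := by
      filter_upwards [hν] with y hy
      exact exp_fderiv_dir (hy.differentiableAt two_ne_zero) (ee j)
    rw [h1.fderiv_eq]
    have hwd : DifferentiableAt ℝ (fun y => fderiv ℝ ν y (ee j)) x :=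
      hνd.clm_apply (differentiableAt_const _)
    have hdd : DifferentiableAt ℝ (fun y => -z * ((fderiv ℝ ν y (ee j) : ℝ) : ℂ)) x := by
      apply DifferentiableAt.const_mul
      exact Complex.ofRealCLM.differentiableAt.comp x hwd
    rw [fderiv_fun_mul hgx hdd, ContinuousLinearMap.add_apply, ContinuousLinearMap.coe_smul',
      Pi.smul_apply, ContinuousLinearMap.coe_smul', Pi.smul_apply]
    rw [fderiv_constmul_ofReal hwd (-z) (ee j), exp_fderiv_dir (hνx.differentiableAt two_ne_zero)]
    simp only [smul_eq_mul]
    ring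
  rw [lap_def, Finset.sum_congr rfl fun j _ => key j]
  rw [lap_def (f := ν)]
  push_cast
  rw [← Finset.mul_sum, Finset.sum_sub_distrib, ← Finset.mul_sum, ← Finset.mul_sum]
  ring

end expfactor

theorem lap_gradient_eq_zero {U : Set E3'} (hU : IsOpen U) {p₀ : E3' → ℝ}
    (hp₀ : ContDiffOn ℝ (⊤ : ℕ∞) p₀ U) (hharm : ∀ y ∈ U, lap p₀ y = 0)
    {x : E3'} (hx : x ∈ U) :
    lap (fun y => gradient p₀ y) x = 0 := by
  have hUx : U ∈ 𝓝 x := hU.mem_nhds hx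
  have hp : ∀ y ∈ U, ContDiffAt ℝ (⊤ : ℕ∞) p₀ y := fun y hy => hp₀.contDiffAt (hU.mem_nhds hy)
  set D := fderiv ℝ p₀ with hD
  set f2 := fderiv ℝ D with hf2
  have hDd : ∀ y ∈ U, DifferentiableAt ℝ D y := fun y hy =>
    contDiffAt_fderiv_diff ((hp y hy).of_le (WithTop.coe_le_coe.mpr le_top))
  have hD2 : ∀ y ∈ U, ContDiffAt ℝ 2 D y := fun y hy =>
    ((hp y hy).fderiv_right (m := 2) (WithTop.coe_le_coe.mpr le_top)).of_le (by norm_num)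
  have hf2d : DifferentiableAt ℝ f2 x := contDiffAt_fderiv_diff (hD2 x hx)
  set L := (InnerProductSpace.toDual ℝ E3').symm.toContinuousLinearEquiv.toContinuousLinearMap
    with hL
  have hgrad_eq : (fun y => gradient p₀ y) = fun y => L (D y) := rfl
  rw [hgrad_eq, lap_clm L (by filter_upwards [hUx] with y hy using hD2 y hy)]
  have main : lap D x = 0 := by
    apply ContinuousLinearMap.ext
    intro c
    have hf2j : ∀ a : E3', DifferentiableAt ℝ (fun y => f2 y a) x := fun a =>
      hf2d.clm_apply (differentiableAt_const a)
    have term : ∀ j : Fin 3,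
        (fderiv ℝ (fun y => fderiv ℝ D y (ee j)) x (ee j)) c
          = fderiv ℝ (fun y => f2 y (ee j) (ee j)) x c := by
      intro j
      set hj := fun y => D y (ee j) with hhj
      have hjC2 : ContDiffAt ℝ 2 hj x := (hD2 x hx).clm_apply contDiffAt_const
      have hjd : DifferentiableAt ℝ (fderiv ℝ hj) x := contDiffAt_fderiv_diff hjC2
      have hjder : ∀ y ∈ U, fderiv ℝ hj y = (f2 y).flip (ee j) := fun y hy =>
        fderiv_directional (hDd y hy) (ee j)
      have stepA : (fderiv ℝ (fun y => fderiv ℝ D y (ee j)) x (ee j)) c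
          = fderiv ℝ (fun y => f2 y (ee j) c) x (ee j) :=
        (clm_apply_fderiv (hf2j (ee j)) (ee j) c).symm
      have stepB : (fun y => f2 y (ee j) c) =ᶠ[𝓝 x] (fun y => fderiv ℝ hj y c) := by
        filter_upwards [hUx] with y hy
        have hsym := ((hp y hy).of_le (WithTop.coe_le_coe.mpr le_top) : ContDiffAt ℝ 2 p₀ y).isSymmSndFDerivAt (by simp [minSmoothness_of_isRCLikeNormedField])
        rw [hjder y hy, ContinuousLinearMap.flip_apply]
        exact hsym (ee j) c
      have stepC : fderiv ℝ (fun y => fderiv ℝ hj y c) x (ee j)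
          = fderiv ℝ (fun y => fderiv ℝ hj y (ee j)) x c := by
        rw [fderiv_directional hjd c, fderiv_directional hjd (ee j),
          ContinuousLinearMap.flip_apply, ContinuousLinearMap.flip_apply]
        exact hjC2.isSymmSndFDerivAt (by simp [minSmoothness_of_isRCLikeNormedField]) (ee j) c
      have stepD : (fun y => fderiv ℝ hj y (ee j)) =ᶠ[𝓝 x] (fun y => f2 y (ee j) (ee j)) := by
        filter_upwards [hUx] with y hy
        rw [hjder y hy, ContinuousLinearMap.flip_apply]
      rw [stepA, stepB.fderiv_eq, stepC, stepD.fderiv_eq]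
    have hsum : (fun y => ∑ j : Fin 3, f2 y (ee j) (ee j)) =ᶠ[𝓝 x] (fun _ => (0:ℝ)) := by
      filter_upwards [hUx] with y hy
      have : ∀ j : Fin 3, f2 y (ee j) (ee j)
          = fderiv ℝ (fun t => fderiv ℝ p₀ t (ee j)) y (ee j) := by
        intro j
        rw [fderiv_directional (hDd y hy) (ee j), ContinuousLinearMap.flip_apply]
      rw [Finset.sum_congr rfl fun j _ => this j]
      exact hharm y hy
    have hfd : ∀ j : Fin 3, DifferentiableAt ℝ (fun y => f2 y (ee j) (ee j)) x := fun j =>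
      (hf2j (ee j)).clm_apply (differentiableAt_const _)
    have final : ∑ j : Fin 3, fderiv ℝ (fun y => f2 y (ee j) (ee j)) x c = 0 := by
      have := fderiv_fun_sum (A := fun (j : Fin 3) y => f2 y (ee j) (ee j)) (x := x)
        (u := Finset.univ) (fun j _ => hfd j)
      calc ∑ j : Fin 3, fderiv ℝ (fun y => f2 y (ee j) (ee j)) x c
          = (∑ j : Fin 3, fderiv ℝ (fun y => f2 y (ee j) (ee j)) x) c := by
            rw [ContinuousLinearMap.sum_apply]
        _ = fderiv ℝ (fun y => ∑ j : Fin 3, f2 y (ee j) (ee j)) x c := by rw [← this]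
        _ = 0 := by rw [hsum.fderiv_eq]; simp
    rw [lap_def]
    simp only [ContinuousLinearMap.sum_apply, ContinuousLinearMap.zero_apply]
    rw [Finset.sum_congr rfl fun j _ => term j]
    exact final
  rw [main, map_zero]

/-- let `ν` be `C³` on the open set `U` with `|∇ν| = 1`, `p₀` smooth and
harmonic on `U`, `v = −∇p₀`, `v_τ = v − (v·∇ν)∇ν`, `s ≠ 0`, `z² = s`, and
`u₀ = s^{−1}(v − e^{−zν} v_τ)`. Then on `U`:
`(s − Δ)u₀ + ∇p₀ = e^{−zν}·z^{−1}·(−(Δν)·v_τ − 2·∑_j (∂_j ν)·(∂_j v_τ) + z^{−1}·Δv_τ)`. -/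
theorem statement8
    (U : Set (EuclideanSpace ℝ (Fin 3))) (hU : IsOpen U)
    (ν : EuclideanSpace ℝ (Fin 3) → ℝ)
    (hν : ContDiffOn ℝ 3 ν U)
    (hgrad : ∀ x ∈ U, ‖gradient ν x‖ = 1)
    (p₀ : EuclideanSpace ℝ (Fin 3) → ℝ)
    (hp₀ : ContDiffOn ℝ (⊤ : ℕ∞) p₀ U)
    (hharm : ∀ x ∈ U, lap p₀ x = 0)
    (s z : ℂ) (hs : s ≠ 0) (hz : z ^ 2 = s)
    (v vτ : EuclideanSpace ℝ (Fin 3) → EuclideanSpace ℝ (Fin 3))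
    (u₀ : EuclideanSpace ℝ (Fin 3) → EuclideanSpace ℂ (Fin 3))
    (hv : ∀ y, v y = -gradient p₀ y)
    (hvτ : ∀ y, vτ y = v y - (inner ℝ (v y) (gradient ν y) : ℝ) • gradient ν y)
    (hu₀ : ∀ y, u₀ y = s⁻¹ • (cV (v y) - Complex.exp (-z * (ν y : ℂ)) • cV (vτ y)))
    (x : EuclideanSpace ℝ (Fin 3)) (hx : x ∈ U) :
    s • u₀ x - lap u₀ x + cV (gradient p₀ x)
      = Complex.exp (-z * (ν x : ℂ)) • (z⁻¹ •
          ((-((lap ν x : ℝ) : ℂ)) • cV (vτ x)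
            - (2 : ℂ) • ∑ j : Fin 3,
                ((fderiv ℝ ν x (EuclideanSpace.single j 1) : ℝ) : ℂ) •
                  cV (fderiv ℝ vτ x (EuclideanSpace.single j 1))
            + z⁻¹ • cV (lap vτ x))) := by
  have hz0 : z ≠ 0 := fun h => hs (by rw [← hz, h]; ring)
  have hUx : U ∈ 𝓝 x := hU.mem_nhds hx
  -- function forms
  have hvf : v = fun y => -gradient p₀ y := funext hv
  have hu₀f : u₀ = fun y => s⁻¹ •
      (cVL (v y) - Complex.exp (-z * (ν y : ℂ)) • cVL (vτ y)) := funext hu₀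
  -- smoothness of the pieces on U
  set L := (InnerProductSpace.toDual ℝ E3').symm.toContinuousLinearEquiv.toContinuousLinearMap
    with hLdef
  have hgradp : ContDiffOn ℝ 2 (fun y => gradient p₀ y) U :=
    (hp₀.fderiv_of_isOpen hU (WithTop.coe_le_coe.mpr le_top)).continuousLinearMap_comp L
  have hgradν : ContDiffOn ℝ 2 (fun y => gradient ν y) U :=
    (hν.fderiv_of_isOpen hU (by norm_num)).continuousLinearMap_comp L
  have hv2 : ContDiffOn ℝ 2 v U := by
    rw [hvf]; exact hgradp.neg
  have hτ2 : ContDiffOn ℝ 2 vτ U := by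
    rw [funext hvτ]
    exact hv2.sub ((hv2.inner (𝕜 := ℝ) hgradν).smul hgradν)
  -- eventual ContDiffAt facts
  have Hν : ∀ᶠ y in 𝓝 x, ContDiffAt ℝ 2 ν y := by
    filter_upwards [hUx] with y hy
    exact (hν.contDiffAt (hU.mem_nhds hy)).of_le (by norm_num)
  have Hg : ∀ᶠ y in 𝓝 x, ContDiffAt ℝ 2 (fun t => Complex.exp (-z * (ν t : ℂ))) y :=
    Hν.mono fun y hy => exp_contDiffAt (n := 2) hy
  have Hva : ∀ᶠ y in 𝓝 x, ContDiffAt ℝ 2 v y := by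
    filter_upwards [hUx] with y hy
    exact hv2.contDiffAt (hU.mem_nhds hy)
  have Hτa : ∀ᶠ y in 𝓝 x, ContDiffAt ℝ 2 vτ y := by
    filter_upwards [hUx] with y hy
    exact hτ2.contDiffAt (hU.mem_nhds hy)
  have HV : ∀ᶠ y in 𝓝 x, ContDiffAt ℝ 2 (fun t => cVL (v t)) y := by
    filter_upwards [hUx] with y hy
    exact (hv2.continuousLinearMap_comp cVL).contDiffAt (hU.mem_nhds hy)
  have HW : ∀ᶠ y in 𝓝 x, ContDiffAt ℝ 2 (fun t => cVL (vτ t)) y := by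
    filter_upwards [hUx] with y hy
    exact (hτ2.continuousLinearMap_comp cVL).contDiffAt (hU.mem_nhds hy)
  have HgW : ∀ᶠ y in 𝓝 x, ContDiffAt ℝ 2
      (fun t => Complex.exp (-z * (ν t : ℂ)) • cVL (vτ t)) y := by
    filter_upwards [Hg, HW] with y hgy hwy
    exact hgy.smul hwy
  have Hsub : ∀ᶠ y in 𝓝 x, ContDiffAt ℝ 2
      (fun t => cVL (v t) - Complex.exp (-z * (ν t : ℂ)) • cVL (vτ t)) y := by
    filter_upwards [HV, HgW] with y h1 h2
    exact h1.sub h2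
  -- compute the Laplacian of u₀
  have lapV : lap (fun t => cVL (v t)) x = 0 := by
    rw [lap_clm cVL Hva]
    have : lap v x = 0 := by
      rw [hvf]
      have hneg : (fun y => -gradient p₀ y)
          = fun y => (-(ContinuousLinearMap.id ℝ E3')) (gradient p₀ y) := by
        funext y; simp
      rw [hneg, lap_clm (-(ContinuousLinearMap.id ℝ E3')) (by
        filter_upwards [hUx] with y hy
        exact hgradp.contDiffAt (hU.mem_nhds hy))]
      rw [lap_gradient_eq_zero hU hp₀ hharm hx]
      simp
    rw [this, map_zero]
  have fderiv_cVL : ∀ (a : E3'),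
      fderiv ℝ (fun t => cVL (vτ t)) x a = cVL (fderiv ℝ vτ x a) := by
    intro a
    have hd : DifferentiableAt ℝ vτ x :=
      (hτ2.contDiffAt hUx).differentiableAt two_ne_zero
    rw [show (fun t => cVL (vτ t)) = cVL ∘ vτ from rfl,
      fderiv_comp x cVL.differentiableAt hd, ContinuousLinearMap.fderiv]
    rfl
  have lapW : lap (fun t => cVL (vτ t)) x = cVL (lap vτ x) := lap_clm cVL Hτa
  have sumsq : (∑ j : Fin 3, ((fderiv ℝ ν x (ee j) : ℝ) : ℂ)^2) = 1 := by
    have h1 : ∑ j : Fin 3, (fderiv ℝ ν x (ee j))^2 = 1 := by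
      rw [grad_sq_sum, hgrad x hx]; norm_num
    calc ∑ j : Fin 3, ((fderiv ℝ ν x (ee j) : ℝ) : ℂ)^2
        = ((∑ j : Fin 3, (fderiv ℝ ν x (ee j))^2 : ℝ) : ℂ) := by push_cast; ring
      _ = 1 := by rw [h1]; norm_num
  have lapg : lap (fun t => Complex.exp (-z * (ν t : ℂ))) x
      = (z^2 - z * ((lap ν x : ℝ) : ℂ)) * Complex.exp (-z * (ν x : ℂ)) := by
    rw [exp_lap Hν, sumsq, mul_one]
  have lapgW : lap (fun t => Complex.exp (-z * (ν t : ℂ)) • cVL (vτ t)) x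
      = ((z^2 - z * ((lap ν x : ℝ) : ℂ)) * Complex.exp (-z * (ν x : ℂ))) • cVL (vτ x)
        + ((2 : ℂ) * (Complex.exp (-z * (ν x : ℂ)) * (-z))) •
            ∑ j : Fin 3, ((fderiv ℝ ν x (ee j) : ℝ) : ℂ) • cVL (fderiv ℝ vτ x (ee j))
        + Complex.exp (-z * (ν x : ℂ)) • cVL (lap vτ x) := by
    rw [lap_smul Hg HW, lapg, lapW]
    have hterm : ∀ j : Fin 3,
        fderiv ℝ (fun t => Complex.exp (-z * (ν t : ℂ))) x (ee j)
            • fderiv ℝ (fun t => cVL (vτ t)) x (ee j)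
          = (Complex.exp (-z * (ν x : ℂ)) * (-z)) •
              (((fderiv ℝ ν x (ee j) : ℝ) : ℂ) • cVL (fderiv ℝ vτ x (ee j))) := by
      intro j
      rw [fderiv_cVL (ee j), exp_fderiv_dir ((hν.contDiffAt hUx).differentiableAt (by norm_num))
        (ee j), smul_smul]
      congr 1
      ring
    rw [Finset.sum_congr rfl fun j _ => hterm j, ← Finset.smul_sum, smul_smul]
  have lapu : lap u₀ x = s⁻¹ • (0 - lap (fun t => Complex.exp (-z * (ν t : ℂ)) • cVL (vτ t)) x)
      := by
    rw [hu₀f, lap_const_smul Hsub, lap_sub HV HgW, lapV]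
  -- assemble
  rw [lapu, lapgW, hu₀ x]
  have hgpx : cV (gradient p₀ x) = -cVL (v x) := by
    rw [← cVL_apply, show gradient p₀ x = -(v x) by rw [hv x]; simp, map_neg]
  rw [hgpx]
  simp only [cVL_apply, show ∀ j : Fin 3, (EuclideanSpace.single j (1:ℝ)) = ee j from fun _ => rfl]
  rw [← hz]
  match_scalars <;> field_simp <;> ring
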